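/- arXiv:2605.04718 — 8 statements merged into one kernel-verified Lean document; each statement's English description precedes it below -/
import Mathlib

section
/- Let k ≥ 1 and let A ∈ (ℕ*)^k be an even tuple (its last entry is even). For every tuple I of positive integers, the preimage ψ_A^{-1}({I}) equals {I, I + e_k, I + 2e_k} if I ∈ S_{A−e_k}; equals {I + 2e_k} if I ∈ S_A ∪ N_A; and equals {I} otherwise. -/
open scoped Classical

/-- Tuples of positive integers, modelled as lists of naturals with positive entries. -/
def IsPosTuple (I : List ℕ) : Prop := ∀ x ∈ I, 0 < x

/-- The `k`-th prefix map `p_k`. -/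
def prefixMap (k : ℕ) (I : List ℕ) : List ℕ := if I.length < k then I else I.take k

/-- Add `m` to the `k`-th entry (1-based) of a tuple: `I + m·e_k`. -/
def addAt (k m : ℕ) (I : List ℕ) : List ℕ := List.modify I (k - 1) (· + m)

/-- Subtract `m` from the `k`-th entry (1-based) of a tuple: `I − m·e_k`. -/
def subAt (k m : ℕ) (I : List ℕ) : List ℕ := List.modify I (k - 1) (· - m)

/-- `S_A = {I : p_k(I) = A}` (among tuples of positive integers), where `k = |A|`. -/
def setS (A : List ℕ) : Set (List ℕ) :=
  {I | IsPosTuple I ∧ prefixMap A.length I = A}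

/-- `N_A = {I : ∃ m ∈ ℕ*, p_k(I) = A + m·e_k}` (among tuples of positive integers). -/
def setN (A : List ℕ) : Set (List ℕ) :=
  {I | IsPosTuple I ∧ ∃ m : ℕ, 0 < m ∧ prefixMap A.length I = addAt A.length m A}

/-- `F_A`: the complement of `S_A ∪ N_A` in the set of all tuples of positive integers. -/
def setF (A : List ℕ) : Set (List ℕ) :=
  {I | IsPosTuple I} \ (setS A ∪ setN A)

/-- The relabelling map `ψ_A` (for `A` even): `I ↦ I − e_k` on `S_A`,
`I ↦ I − 2·e_k` on `N_A`, and the identity on `F_A`. -/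
noncomputable def psi (A : List ℕ) (I : List ℕ) : List ℕ :=
  if I ∈ setS A then subAt A.length 1 I
  else if I ∈ setN A then subAt A.length 2 I
  else I

/-! Write `A = P ++ [a]`. The sets `S_A`, `N_A` and `S_{A−e_k}` only contain tuples of the form
`P ++ x :: r`, on which `ψ_A` acts through the `k`-th entry alone, by the one-variable map
`psiEntry a`; every other tuple is fixed by `ψ_A`. Hence the preimage of `P ++ y :: r` is read
off from the preimage of `y` under `psiEntry a`, which for `y > 0` is `{y, y + 1, y + 2}` if
`y = a − 1`, `{y + 2}` if `y ≥ a`, and `{y}` if `y < a − 1`. -/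

lemma List.modify_append_cons {α : Type*} (P : List α) (f : α → α) (x : α) (r : List α) :
    (P ++ x :: r).modify P.length f = P ++ f x :: r := by
  induction P <;> simp_all

lemma isPosTuple_append_cons {P r : List ℕ} {x : ℕ} :
    IsPosTuple (P ++ x :: r) ↔ IsPosTuple P ∧ 0 < x ∧ IsPosTuple r := by
  simp [IsPosTuple, or_imp, forall_and]

section

variable (P : List ℕ)

lemma addAt_append_cons (m x : ℕ) (r : List ℕ) :
    addAt (P.length + 1) m (P ++ x :: r) = P ++ (x + m) :: r :=
  List.modify_append_cons ..

lemma subAt_append_cons (m x : ℕ) (r : List ℕ) :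
    subAt (P.length + 1) m (P ++ x :: r) = P ++ (x - m) :: r :=
  List.modify_append_cons ..

variable {P} {J : List ℕ} {a b x : ℕ} {r : List ℕ}

lemma prefixMap_eq_append_singleton_iff :
    prefixMap (P.length + 1) J = P ++ [b] ↔ ∃ r, J = P ++ b :: r := by
  constructor
  · intro h
    unfold prefixMap at h
    split_ifs at h with hJ
    · exact ⟨[], h⟩
    · exact ⟨J.drop (P.length + 1), by rw [← J.take_append_drop (P.length + 1), h]; simp⟩
  · rintro ⟨r, rfl⟩
    simp [prefixMap, List.take_length_add_append]

lemma mem_setS_append_singleton_iff :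
    J ∈ setS (P ++ [b]) ↔ IsPosTuple J ∧ ∃ r, J = P ++ b :: r := by
  rw [setS, Set.mem_ofPred_eq, List.length_append, List.length_singleton,
    prefixMap_eq_append_singleton_iff]

lemma mem_setN_append_singleton_iff :
    J ∈ setN (P ++ [a]) ↔ IsPosTuple J ∧ ∃ x r, a < x ∧ J = P ++ x :: r := by
  simp only [setN, Set.mem_ofPred_eq, List.length_append, List.length_singleton,
    addAt_append_cons, prefixMap_eq_append_singleton_iff]
  constructor
  · rintro ⟨hJ, m, hm, r, rfl⟩
    exact ⟨hJ, a + m, r, by omega, rfl⟩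
  · rintro ⟨hJ, x, r, hx, rfl⟩
    exact ⟨hJ, x - a, by omega, r, by rw [Nat.add_sub_cancel' hx.le]⟩

lemma append_cons_mem_setS_iff (hJ : IsPosTuple (P ++ x :: r)) :
    P ++ x :: r ∈ setS (P ++ [a]) ↔ x = a := by
  simp [mem_setS_append_singleton_iff, hJ]

lemma append_cons_mem_setN_iff (hJ : IsPosTuple (P ++ x :: r)) :
    P ++ x :: r ∈ setN (P ++ [a]) ↔ a < x := by
  simp [mem_setN_append_singleton_iff, hJ]

end

def psiEntry (a x : ℕ) : ℕ := if x = a then x - 1 else if a < x then x - 2 else x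

lemma psiEntry_zero (a : ℕ) : psiEntry a 0 = 0 := by
  unfold psiEntry; split_ifs <;> rfl

lemma setOf_psiEntry_eq_of_eq_sub_one {a y : ℕ} (hy : 0 < y) (hya : y = a - 1) :
    {x | psiEntry a x = y} = {y, y + 1, y + 2} := by
  ext x; simp only [psiEntry, Set.mem_ofPred_eq, Set.mem_insert_iff, Set.mem_singleton_iff]
  split_ifs <;> omega

lemma setOf_psiEntry_eq_of_le {a y : ℕ} (hy : 0 < y) (hay : a ≤ y) :
    {x | psiEntry a x = y} = {y + 2} := by
  ext x; simp only [psiEntry, Set.mem_ofPred_eq, Set.mem_singleton_iff]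
  split_ifs <;> omega

lemma setOf_psiEntry_eq_of_add_one_lt {a y : ℕ} (hya : y + 1 < a) :
    {x | psiEntry a x = y} = {y} := by
  ext x; simp only [psiEntry, Set.mem_ofPred_eq, Set.mem_singleton_iff]
  split_ifs <;> omega

section

variable {P : List ℕ} {a x y : ℕ} {r : List ℕ}

lemma psi_append_cons (hJ : IsPosTuple (P ++ x :: r)) :
    psi (P ++ [a]) (P ++ x :: r) = P ++ psiEntry a x :: r := by
  rw [psi, append_cons_mem_setS_iff hJ, append_cons_mem_setN_iff hJ, psiEntry,
    List.length_append, List.length_singleton]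
  split_ifs <;> simp [subAt_append_cons, *]

lemma psi_eq_self_of_forall_ne {J : List ℕ} (h : ∀ x r, J ≠ P ++ x :: r) :
    psi (P ++ [a]) J = J := by
  simp [psi, mem_setS_append_singleton_iff, mem_setN_append_singleton_iff, h]

lemma preimage_psi_append_cons (hI : IsPosTuple (P ++ y :: r)) :
    {J | IsPosTuple J ∧ psi (P ++ [a]) J = P ++ y :: r} =
      (fun x ↦ P ++ x :: r) '' {x | psiEntry a x = y} := by
  obtain ⟨hP, hy, hr⟩ := isPosTuple_append_cons.1 hI
  ext J
  constructor
  · rintro ⟨hJ, hψ⟩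
    by_cases hform : ∃ x r', J = P ++ x :: r'
    · obtain ⟨x, r', rfl⟩ := hform
      rw [psi_append_cons hJ] at hψ
      obtain ⟨hx, rfl⟩ : psiEntry a x = y ∧ r' = r := by simpa using hψ
      exact ⟨x, hx, rfl⟩
    · push Not at hform
      rw [psi_eq_self_of_forall_ne hform] at hψ
      exact absurd hψ (hform y r)
  · rintro ⟨x, hx, rfl⟩
    have hx0 : 0 < x := Nat.pos_of_ne_zero fun h ↦ by
      rw [Set.mem_ofPred_eq, h, psiEntry_zero] at hx; omega
    have hJ : IsPosTuple (P ++ x :: r) := isPosTuple_append_cons.2 ⟨hP, hx0, hr⟩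
    exact ⟨hJ, by rw [psi_append_cons hJ, hx]⟩

lemma preimage_psi_of_forall_ne {I : List ℕ} (hI : IsPosTuple I) (h : ∀ x r, I ≠ P ++ x :: r) :
    {J | IsPosTuple J ∧ psi (P ++ [a]) J = I} = {I} := by
  ext J
  constructor
  · rintro ⟨hJ, hψ⟩
    by_cases hform : ∃ x r, J = P ++ x :: r
    · obtain ⟨x, r, rfl⟩ := hform
      rw [psi_append_cons hJ] at hψ
      exact absurd hψ.symm (h _ r)
    · push Not at hform
      rwa [psi_eq_self_of_forall_ne hform] at hψ
  · rintro rfl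
    exact ⟨hI, psi_eq_self_of_forall_ne h⟩

end

theorem psi_preimage_singleton_general (k : ℕ) (hk : 1 ≤ k) (A : List ℕ)
    (hlen : A.length = k)
    (I : List ℕ) (hI : IsPosTuple I) :
    (I ∈ setS (subAt k 1 A) →
        {J | IsPosTuple J ∧ psi A J = I} = {I, addAt k 1 I, addAt k 2 I}) ∧
    (I ∈ setS A ∪ setN A →
        {J | IsPosTuple J ∧ psi A J = I} = {addAt k 2 I}) ∧
    (I ∉ setS (subAt k 1 A) → I ∉ setS A ∪ setN A →
        {J | IsPosTuple J ∧ psi A J = I} = {I}) := by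
  obtain ⟨P, a, rfl⟩ : ∃ P a, A = P ++ [a] := by
    simpa using A.eq_nil_or_concat.resolve_left (by rintro rfl; simp at hlen; omega)
  obtain rfl : k = P.length + 1 := by simpa using hlen.symm
  rw [subAt_append_cons]
  by_cases hform : ∃ y r, I = P ++ y :: r
  · obtain ⟨y, r, rfl⟩ := hform
    have hy : 0 < y := (isPosTuple_append_cons.1 hI).2.1
    simp only [Set.mem_union, append_cons_mem_setS_iff hI, append_cons_mem_setN_iff hI,
      preimage_psi_append_cons hI, addAt_append_cons]
    refine ⟨fun hya ↦ ?_, fun hay ↦ ?_, fun hya hay ↦ ?_⟩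
    · simp [setOf_psiEntry_eq_of_eq_sub_one hy hya, Set.image_insert_eq]
    · simp [setOf_psiEntry_eq_of_le hy (by omega : a ≤ y)]
    · simp [setOf_psiEntry_eq_of_add_one_lt (by omega : y + 1 < a)]
  · push Not at hform
    simp [preimage_psi_of_forall_ne hI hform, mem_setS_append_singleton_iff,
      mem_setN_append_singleton_iff, hform]

/-- for an even tuple `A` of positive integers of length `k ≥ 1` and every
tuple `I` of positive integers, the preimage `ψ_A⁻¹({I})` (within the set of all tuples
of positive integers) is `{I, I + e_k, I + 2e_k}` if `I ∈ S_{A−e_k}`;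
`{I + 2e_k}` if `I ∈ S_A ∪ N_A`; and `{I}` otherwise. -/
theorem psi_preimage_singleton (k : ℕ) (hk : 1 ≤ k) (A : List ℕ)
    (hlen : A.length = k) (hpos : IsPosTuple A)
    (hne : A ≠ []) (heven : Even (A.getLast hne))
    (I : List ℕ) (hI : IsPosTuple I) :
    (I ∈ setS (subAt k 1 A) →
        {J | IsPosTuple J ∧ psi A J = I} = {I, addAt k 1 I, addAt k 2 I}) ∧
    (I ∈ setS A ∪ setN A →
        {J | IsPosTuple J ∧ psi A J = I} = {addAt k 2 I}) ∧
    (I ∉ setS (subAt k 1 A) → I ∉ setS A ∪ setN A →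
        {J | IsPosTuple J ∧ psi A J = I} = {I}) :=
  psi_preimage_singleton_general k hk A hlen I hI
end

section
/- Let a', b' ∈ ℝ with a' < b', and let l', u' : [a', b'] → ℝ be continuous functions with l'(x) < u'(x) for all x ∈ (a', b'). Set X = {(x, y) ∈ ℝ² : a' < x < b' and l'(x) < y < u'(x)}. Then X is equiregular to (0,1)² ⊆ ℝ²: there exists a homeomorphism φ : closure(X) → [0,1]² (for the subspace topologies inherited from ℝ²) such that φ(X) = (0,1)². -/
/-!
A fiberwise affine map identifies two sectors over `[a, b]` whose boundary curves meet at the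
same points: on the closed sector it is continuous because a collapsed fiber goes to a collapsed
fiber, and injective because a non-collapsed fiber goes to a non-collapsed one, so by compactness
it is a homeomorphism of the closures. Taking the lower curve `0` and an upper curve that is
concave and vanishes exactly where the fiber of `X` collapses turns `X` into a bounded open convex
set, and two bounded open convex sets in the plane are equiregular through the gauge rescaling
homeomorphism of the plane.
-/

open Set Filter Topology Bornology

def Equiregular {α β : Type*} [TopologicalSpace α] [TopologicalSpace β]
    (X : Set α) (Y : Set β) : Prop :=
  ∃ φ : closure X ≃ₜ closure Y, ∀ q : closure X, (q : α) ∈ X ↔ (φ q : β) ∈ Y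

namespace Equiregular

variable {α β γ : Type*} [TopologicalSpace α] [TopologicalSpace β] [TopologicalSpace γ]
  {X : Set α} {Y : Set β} {Z : Set γ}

theorem trans (h₁ : Equiregular X Y) (h₂ : Equiregular Y Z) : Equiregular X Z := by
  obtain ⟨φ, hφ⟩ := h₁
  obtain ⟨ψ, hψ⟩ := h₂
  exact ⟨φ.trans ψ, fun q => (hφ q).trans (hψ (φ q))⟩

theorem image_of_injOn [T2Space β] {f : α → β} (hX : IsCompact (closure X))
    (hf : ContinuousOn f (closure X)) (hinj : InjOn f (closure X)) :
    Equiregular X (f '' X) := by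
  have hcl : f '' closure X = closure (f '' X) :=
    hf.image_closure.antisymm <|
      closure_minimal (image_mono subset_closure) (hX.image_of_continuousOn hf).isClosed
  have : CompactSpace (closure X) := isCompact_iff_compactSpace.mp hX
  let e : closure X ≃ₜ f '' closure X :=
    Continuous.homeoOfEquivCompactToT2 (f := hinj.bijOn_image.equiv f)
      (hf.mapsToRestrict (mapsTo_image f _))
  exact ⟨e.trans (Homeomorph.setCongr hcl), fun q => (hinj.mem_image_iff subset_closure q.2).symm⟩

end Equiregular

theorem Convex.equiregular {E : Type*} [NormedAddCommGroup E] [NormedSpace ℝ E]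
    [FiniteDimensional ℝ E] {s t : Set E}
    (hs : Convex ℝ s) (hso : IsOpen s) (hsne : s.Nonempty) (hsb : IsBounded s)
    (ht : Convex ℝ t) (hto : IsOpen t) (htne : t.Nonempty) (htb : IsBounded t) :
    Equiregular s t := by
  obtain ⟨e, he, -⟩ := exists_homeomorph_image_eq hs (by rwa [hso.interior_eq])
    (NormedSpace.isVonNBounded_of_isBounded ℝ hsb) ht (by rwa [hto.interior_eq])
    (NormedSpace.isVonNBounded_of_isBounded ℝ htb)
  rw [hso.interior_eq, hto.interior_eq] at he
  have := FiniteDimensional.proper_real E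
  exact he ▸ Equiregular.image_of_injOn hsb.isCompact_closure e.continuous.continuousOn
    e.injective.injOn

def sector (a b : ℝ) (l u : ℝ → ℝ) : Set (ℝ × ℝ) :=
  {q | q.1 ∈ Ioo a b ∧ q.2 ∈ Ioo (l q.1) (u q.1)}

def closedSector (a b : ℝ) (l u : ℝ → ℝ) : Set (ℝ × ℝ) :=
  {q | q.1 ∈ Icc a b ∧ q.2 ∈ Icc (l q.1) (u q.1)}

/-- On a collapsed fiber `l x = u x` the quotient is `0 / 0 = 0`, so the fiber goes to `l₂ x`. -/
noncomputable def sectorMap (l u l₂ u₂ : ℝ → ℝ) (q : ℝ × ℝ) : ℝ × ℝ :=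
  (q.1, l₂ q.1 + (q.2 - l q.1) / (u q.1 - l q.1) * (u₂ q.1 - l₂ q.1))

section

variable {a b : ℝ} {l u l₂ u₂ : ℝ → ℝ}

theorem sector_subset_closedSector : sector a b l u ⊆ closedSector a b l u :=
  fun _ ⟨hx, hy⟩ => ⟨Ioo_subset_Icc_self hx, Ioo_subset_Icc_self hy⟩

theorem isClosed_closedSector (hl : ContinuousOn l (Icc a b)) (hu : ContinuousOn u (Icc a b)) :
    IsClosed (closedSector a b l u) := by
  have hstrip : IsClosed (Icc a b ×ˢ univ : Set (ℝ × ℝ)) := isClosed_Icc.prod isClosed_univ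
  have hfst : MapsTo Prod.fst (Icc a b ×ˢ univ : Set (ℝ × ℝ)) (Icc a b) := fun _ hq => hq.1
  have hlo := hstrip.isClosed_le (hl.comp continuousOn_fst hfst) continuousOn_snd
  have hup := hlo.isClosed_le continuousOn_snd
    ((hu.comp continuousOn_fst hfst).mono (sep_subset _ _))
  convert hup using 1
  ext q
  simp [closedSector, and_assoc]

theorem isOpen_sector (hl : ContinuousOn l (Ioo a b)) (hu : ContinuousOn u (Ioo a b)) :
    IsOpen (sector a b l u) := by
  have hfst : MapsTo Prod.fst (Ioo a b ×ˢ univ : Set (ℝ × ℝ)) (Ioo a b) := fun _ hq => hq.1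
  have hgap : ContinuousOn (fun q : ℝ × ℝ => (q.2 - l q.1, u q.1 - q.2)) (Ioo a b ×ˢ univ) :=
    (continuousOn_snd.sub (hl.comp continuousOn_fst hfst)).prodMk
      ((hu.comp continuousOn_fst hfst).sub continuousOn_snd)
  convert hgap.isOpen_inter_preimage (isOpen_Ioo.prod isOpen_univ)
    (isOpen_Ioi.prod isOpen_Ioi) (t := Ioi 0 ×ˢ Ioi 0) using 1
  ext q
  simp [sector, sub_pos]

theorem convex_sector (hl : ConvexOn ℝ (Ioo a b) l) (hu : ConcaveOn ℝ (Ioo a b) u) :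
    Convex ℝ (sector a b l u) := by
  convert hl.convex_strict_epigraph.inter hu.convex_strict_hypograph using 1
  ext q
  simp only [sector, mem_Ioo, mem_ofPred_eq, mem_inter_iff]
  tauto

theorem nonempty_sector (hab : a < b) (hlu : ∀ x ∈ Ioo a b, l x < u x) :
    (sector a b l u).Nonempty := by
  have hm : (a + b) / 2 ∈ Ioo a b := ⟨by linarith, by linarith⟩
  have := hlu _ hm
  exact ⟨((a + b) / 2, (l ((a + b) / 2) + u ((a + b) / 2)) / 2), hm, by linarith, by linarith⟩

theorem sectorMap_sectorMap {q : ℝ × ℝ} (hq : q.2 ∈ Icc (l q.1) (u q.1))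
    (hpinch : l q.1 ≠ u q.1 → l₂ q.1 ≠ u₂ q.1) :
    sectorMap l₂ u₂ l u (sectorMap l u l₂ u₂ q) = q := by
  obtain ⟨x, y⟩ := q
  by_cases hx : l x = u x
  · have hy : y = l x := le_antisymm (hx ▸ hq.2) hq.1
    simp [sectorMap, hx, hy]
  · have h₁ : u x - l x ≠ 0 := sub_ne_zero.2 (Ne.symm hx)
    have h₂ : u₂ x - l₂ x ≠ 0 := sub_ne_zero.2 (Ne.symm (hpinch hx))
    simp only [sectorMap, Prod.mk.injEq, true_and]
    field_simp
    ring

theorem mapsTo_sectorMap_sector (hlu₂ : ∀ x ∈ Ioo a b, l₂ x < u₂ x) :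
    MapsTo (sectorMap l u l₂ u₂) (sector a b l u) (sector a b l₂ u₂) := by
  rintro ⟨x, y⟩ ⟨hx, hyl, hyu⟩
  have hw := sub_pos.2 (hlu₂ x hx)
  have ht₀ : 0 < (y - l x) / (u x - l x) := div_pos (by linarith) (by linarith)
  have ht₁ : (y - l x) / (u x - l x) < 1 := (div_lt_one (by linarith)).2 (by linarith)
  exact ⟨hx, by simp only [sectorMap]; nlinarith, by simp only [sectorMap]; nlinarith⟩

theorem mapsTo_sectorMap_closedSector (hlu₂ : ∀ x ∈ Icc a b, l₂ x ≤ u₂ x) :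
    MapsTo (sectorMap l u l₂ u₂) (closedSector a b l u) (closedSector a b l₂ u₂) := by
  rintro ⟨x, y⟩ ⟨hx, hyl, hyu⟩
  have hw := sub_nonneg.2 (hlu₂ x hx)
  have ht₀ : 0 ≤ (y - l x) / (u x - l x) := div_nonneg (by linarith) (by linarith)
  have ht₁ : (y - l x) / (u x - l x) ≤ 1 := div_le_one_of_le₀ (by linarith) (by linarith)
  exact ⟨hx, by simp only [sectorMap]; nlinarith, by simp only [sectorMap]; nlinarith⟩

theorem continuousOn_sectorMap (hl : ContinuousOn l (Icc a b)) (hu : ContinuousOn u (Icc a b))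
    (hl₂ : ContinuousOn l₂ (Icc a b)) (hu₂ : ContinuousOn u₂ (Icc a b))
    (hpinch : ∀ x ∈ Icc a b, l x = u x → l₂ x = u₂ x) :
    ContinuousOn (sectorMap l u l₂ u₂) (closedSector a b l u) := by
  have lift : ∀ {f : ℝ → ℝ}, ContinuousOn f (Icc a b) →
      ContinuousOn (fun q : ℝ × ℝ => f q.1) (closedSector a b l u) :=
    fun hf => hf.comp continuousOn_fst fun _ hq => hq.1
  intro q hq
  refine continuousWithinAt_fst.prodMk ?_
  have hw : Tendsto (fun z : ℝ × ℝ => u₂ z.1 - l₂ z.1) (𝓝[closedSector a b l u] q)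
      (𝓝 (u₂ q.1 - l₂ q.1)) := (lift hu₂ q hq).sub (lift hl₂ q hq)
  by_cases hx : l q.1 = u q.1
  · -- the fiber coordinate stays in `[0, 1]` while the target width tends to `0`
    have hbdd : IsBoundedUnder (· ≤ ·) (𝓝[closedSector a b l u] q)
        fun z => ‖(z.2 - l z.1) / (u z.1 - l z.1)‖ := by
      refine isBoundedUnder_of_eventually_le (a := 1) <|
        eventually_mem_nhdsWithin.mono fun z ⟨_, hzl, hzu⟩ => ?_
      rw [Real.norm_eq_abs, abs_le]
      exact ⟨by linarith [div_nonneg (sub_nonneg.2 hzl) (sub_nonneg.2 (hzl.trans hzu))],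
        div_le_one_of_le₀ (by linarith) (by linarith)⟩
    have hw₀ : u₂ q.1 - l₂ q.1 = 0 := by rw [hpinch _ hq.1 hx, sub_self]
    rw [hw₀] at hw
    have := (lift hl₂ q hq).tendsto.add (isBoundedUnder_le_mul_tendsto_zero hbdd hw)
    simpa [ContinuousWithinAt, sectorMap, hw₀] using this
  · exact (lift hl₂ q hq).add <|
      ((continuousWithinAt_snd.sub (lift hl q hq)).div ((lift hu q hq).sub (lift hl q hq))
        (sub_ne_zero.2 (Ne.symm hx))).mul hw

theorem closedSector_subset_image :
    closedSector a b l u ⊆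
      sectorMap (fun _ => 0) (fun _ => 1) l u '' closedSector a b (fun _ => 0) (fun _ => 1) :=
  fun _ hq => ⟨_, mapsTo_sectorMap_closedSector (fun _ _ => zero_le_one) hq,
    sectorMap_sectorMap hq.2 fun _ => zero_ne_one⟩

theorem closure_sector_s6 (hab : a < b) (hl : ContinuousOn l (Icc a b))
    (hu : ContinuousOn u (Icc a b)) (hlu : ∀ x ∈ Ioo a b, l x < u x) :
    closure (sector a b l u) = closedSector a b l u := by
  refine (closure_minimal sector_subset_closedSector (isClosed_closedSector hl hu)).antisymm ?_
  set G := sectorMap (fun _ => 0) (fun _ => 1) l u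
  have hsq : closure (sector a b (fun _ => 0) (fun _ => 1)) =
      closedSector a b (fun _ => 0) (fun _ => 1) :=
    closure_prod_eq.trans (by rw [closure_Ioo hab.ne, closure_Ioo zero_ne_one]; rfl)
  calc closedSector a b l u
      ⊆ G '' closure (sector a b (fun _ => 0) (fun _ => 1)) := hsq ▸ closedSector_subset_image
    _ ⊆ closure (G '' sector a b (fun _ => 0) (fun _ => 1)) :=
        (hsq ▸ continuousOn_sectorMap continuousOn_const continuousOn_const hl hu
          fun _ _ h => absurd h zero_ne_one).image_closure
    _ ⊆ closure (sector a b l u) := closure_mono (mapsTo_sectorMap_sector hlu).image_subset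

theorem isCompact_closure_sector (hab : a < b) (hl : ContinuousOn l (Icc a b))
    (hu : ContinuousOn u (Icc a b)) (hlu : ∀ x ∈ Ioo a b, l x < u x) :
    IsCompact (closure (sector a b l u)) := by
  rw [closure_sector_s6 hab hl hu hlu]
  refine IsCompact.of_isClosed_subset ?_ (isClosed_closedSector hl hu) closedSector_subset_image
  exact (isCompact_Icc.prod isCompact_Icc).image_of_continuousOn <|
    continuousOn_sectorMap continuousOn_const continuousOn_const hl hu
      fun _ _ h => absurd h zero_ne_one

theorem isBounded_sector (hab : a < b) (hl : ContinuousOn l (Icc a b))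
    (hu : ContinuousOn u (Icc a b)) (hlu : ∀ x ∈ Ioo a b, l x < u x) :
    IsBounded (sector a b l u) :=
  (isCompact_closure_sector hab hl hu hlu).isBounded.subset subset_closure

theorem image_sectorMap_sector (hlu : ∀ x ∈ Ioo a b, l x < u x)
    (hlu₂ : ∀ x ∈ Ioo a b, l₂ x < u₂ x) :
    sectorMap l u l₂ u₂ '' sector a b l u = sector a b l₂ u₂ := by
  have hinv : ∀ {l u l₂ u₂ : ℝ → ℝ}, (∀ x ∈ Ioo a b, l₂ x < u₂ x) →
      LeftInvOn (sectorMap l₂ u₂ l u) (sectorMap l u l₂ u₂) (sector a b l u) :=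
    fun hlu₂ _ hq => sectorMap_sectorMap (Ioo_subset_Icc_self hq.2)
      fun _ => (hlu₂ _ hq.1).ne
  exact (InvOn.bijOn ⟨hinv hlu₂, hinv hlu⟩ (mapsTo_sectorMap_sector hlu₂)
    (mapsTo_sectorMap_sector hlu)).image_eq

theorem sector_equiregular_sector (hab : a < b) (hl : ContinuousOn l (Icc a b))
    (hu : ContinuousOn u (Icc a b)) (hl₂ : ContinuousOn l₂ (Icc a b))
    (hu₂ : ContinuousOn u₂ (Icc a b)) (hlu : ∀ x ∈ Ioo a b, l x < u x)
    (hlu₂ : ∀ x ∈ Ioo a b, l₂ x < u₂ x) (hpinch : ∀ x ∈ Icc a b, l x = u x ↔ l₂ x = u₂ x) :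
    Equiregular (sector a b l u) (sector a b l₂ u₂) := by
  have hinj : InjOn (sectorMap l u l₂ u₂) (closedSector a b l u) :=
    LeftInvOn.injOn (f₁' := sectorMap l₂ u₂ l u) fun q hq =>
      sectorMap_sectorMap hq.2 (mt (hpinch q.1 hq.1).2)
  have hcl := closure_sector_s6 hab hl hu hlu
  rw [← image_sectorMap_sector hlu hlu₂]
  exact Equiregular.image_of_injOn (isCompact_closure_sector hab hl hu hlu)
    (hcl ▸ continuousOn_sectorMap hl hu hl₂ hu₂ fun x hx => (hpinch x hx).1) (hcl ▸ hinj)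

theorem exists_concaveOn_zero_iff_pinch (hab : a < b) (hlu : ∀ x ∈ Ioo a b, l x < u x) :
    ∃ s : ℝ → ℝ, Continuous s ∧ ConcaveOn ℝ (Ioo a b) s ∧ (∀ x ∈ Ioo a b, 0 < s x) ∧
      ∀ x ∈ Icc a b, l x = u x ↔ 0 = s x := by
  classical
  set c₀ : ℝ := if l a = u a then 0 else 1
  set c₁ : ℝ := if l b = u b then 0 else 1
  have hc₀ : 0 ≤ c₀ := by positivity
  have hc₁ : 0 ≤ c₁ := by positivity
  have hpos : ∀ x ∈ Ioo a b, 0 < min (x - a + c₀) (b - x + c₁) := fun x hx =>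
    lt_min (by linarith [hx.1]) (by linarith [hx.2])
  refine ⟨fun x => min (x - a + c₀) (b - x + c₁), by fun_prop, ?_, hpos, ?_⟩
  · have hI : Convex ℝ (Ioo a b) := convex_Ioo a b
    have hrise : ConcaveOn ℝ (Ioo a b) fun x => x - a + c₀ := by
      refine ((concaveOn_id hI).add_const (c₀ - a)).congr fun x _ => ?_
      simp only [Pi.add_apply, id]; ring
    have hfall : ConcaveOn ℝ (Ioo a b) fun x => b - x + c₁ := by
      refine ((concaveOn_const (b + c₁) hI).sub (convexOn_id hI)).congr fun x _ => ?_
      simp only [Pi.sub_apply, id]; ring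
    exact hrise.inf hfall
  · have hpinch_a : l a = u a ↔ 0 = min (a - a + c₀) (b - a + c₁) := by
      by_cases h : l a = u a
      · simp only [h, sub_self, ↓reduceIte, add_zero, left_eq_inf, true_iff, c₀]
        linarith
      · simpa [c₀, h] using (lt_min one_pos (by linarith) : 0 < min 1 (b - a + c₁)).ne
    have hpinch_b : l b = u b ↔ 0 = min (b - a + c₀) (b - b + c₁) := by
      by_cases h : l b = u b
      · simp only [h, sub_self, ↓reduceIte, add_zero, right_eq_inf, true_iff, c₁]
        linarith
      · simpa [c₁, h] using (lt_min (by linarith) one_pos : 0 < min (b - a + c₀) 1).ne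
    intro x hx
    rcases eq_endpoints_or_mem_Ioo_of_mem_Icc hx with rfl | rfl | hx
    exacts [hpinch_a, hpinch_b, iff_of_false (hlu x hx).ne (hpos x hx).ne]

end

/-- for `a' < b'` and continuous `l', u' : [a', b'] → ℝ` with `l' < u'` on
`(a', b')`, the open sector `X = {(x,y) : a' < x < b', l'(x) < y < u'(x)}` is equiregular
to `(0,1)² ⊆ ℝ²`: there is a homeomorphism `φ : closure X → [0,1]²` with `φ(X) = (0,1)²`. -/
theorem sector_equiregular_unit_square (a' b' : ℝ) (hab : a' < b')
    (l' u' : ℝ → ℝ)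
    (hl : ContinuousOn l' (Set.Icc a' b')) (hu : ContinuousOn u' (Set.Icc a' b'))
    (hlu : ∀ x ∈ Set.Ioo a' b', l' x < u' x)
    (X : Set (ℝ × ℝ))
    (hX : X = {q : ℝ × ℝ | q.1 ∈ Set.Ioo a' b' ∧ q.2 ∈ Set.Ioo (l' q.1) (u' q.1)}) :
    ∃ φ : ↥(closure X) ≃ₜ ↥((Set.Icc (0:ℝ) 1) ×ˢ (Set.Icc (0:ℝ) 1)),
      ∀ q : ↥(closure X),
        (q : ℝ × ℝ) ∈ X ↔ (φ q : ℝ × ℝ) ∈ (Set.Ioo (0:ℝ) 1) ×ˢ (Set.Ioo (0:ℝ) 1) := by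
  obtain ⟨s, hs, hsc, hspos, hpinch⟩ := exists_concaveOn_zero_iff_pinch hab hlu
  have hXs : Equiregular X (sector a' b' (fun _ => 0) s) := hX ▸
    sector_equiregular_sector hab hl hu continuousOn_const hs.continuousOn hlu hspos hpinch
  have hsq : Equiregular (sector a' b' (fun _ => 0) s) (Ioo (0:ℝ) 1 ×ˢ Ioo (0:ℝ) 1) :=
    Convex.equiregular (convex_sector (convexOn_const 0 (convex_Ioo a' b')) hsc)
      (isOpen_sector continuousOn_const hs.continuousOn) (nonempty_sector hab hspos)
      (isBounded_sector hab continuousOn_const hs.continuousOn hspos)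
      ((convex_Ioo 0 1).prod (convex_Ioo 0 1)) (isOpen_Ioo.prod isOpen_Ioo)
      ⟨(1 / 2, 1 / 2), by norm_num⟩ ((Metric.isBounded_Ioo 0 1).prod (Metric.isBounded_Ioo 0 1))
  have hcl : closure (Ioo (0:ℝ) 1 ×ˢ Ioo (0:ℝ) 1) = Icc 0 1 ×ˢ Icc 0 1 := by
    rw [closure_prod_eq, closure_Ioo zero_ne_one]
  obtain ⟨φ, hφ⟩ := hXs.trans hsq
  exact ⟨φ.trans (Homeomorph.setCongr hcl), hφ⟩
end

section
/- Let a', b' ∈ ℝ with a' < b', and let l', u' : [a', b'] → ℝ be continuous functions with l'(x) < u'(x) for all x ∈ (a', b'). Then the closure in ℝ² of the open sector {(x, y) : a' < x < b', l'(x) < y < u'(x)} equals {(x, y) : a' ≤ x ≤ b', l'(x) ≤ y ≤ u'(x)}. -/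
/-- for `a' < b'` and continuous `l', u' : [a', b'] → ℝ` with `l' < u'` on
`(a', b')`, the closure in `ℝ²` of the open sector
`{(x,y) : a' < x < b', l'(x) < y < u'(x)}` is `{(x,y) : a' ≤ x ≤ b', l'(x) ≤ y ≤ u'(x)}`. -/
theorem closure_sector (a' b' : ℝ) (hab : a' < b')
    (l' u' : ℝ → ℝ)
    (hl : ContinuousOn l' (Set.Icc a' b')) (hu : ContinuousOn u' (Set.Icc a' b'))
    (hlu : ∀ x ∈ Set.Ioo a' b', l' x < u' x) :
    closure {q : ℝ × ℝ | q.1 ∈ Set.Ioo a' b' ∧ q.2 ∈ Set.Ioo (l' q.1) (u' q.1)} =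
      {q : ℝ × ℝ | q.1 ∈ Set.Icc a' b' ∧ q.2 ∈ Set.Icc (l' q.1) (u' q.1)} := by
  set S := {q : ℝ × ℝ | q.1 ∈ Set.Ioo a' b' ∧ q.2 ∈ Set.Ioo (l' q.1) (u' q.1)} with hS
  apply Set.Subset.antisymm
  · -- closure S ⊆ closed sector
    intro q hq
    rw [mem_closure_iff_seq_limit] at hq
    obtain ⟨p, hpS, hpq⟩ := hq
    have h1 : Filter.Tendsto (fun n => (p n).1) Filter.atTop (nhds q.1) :=
      (continuous_fst.tendsto q).comp hpq
    have h2 : Filter.Tendsto (fun n => (p n).2) Filter.atTop (nhds q.2) :=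
      (continuous_snd.tendsto q).comp hpq
    have hmem : ∀ n, (p n).1 ∈ Set.Icc a' b' := fun n => Set.Ioo_subset_Icc_self (hpS n).1
    have hq1 : q.1 ∈ Set.Icc a' b' :=
      isClosed_Icc.mem_of_tendsto h1 (Filter.Eventually.of_forall hmem)
    have h1' : Filter.Tendsto (fun n => (p n).1) Filter.atTop (nhdsWithin q.1 (Set.Icc a' b')) :=
      tendsto_nhdsWithin_of_tendsto_nhds_of_eventually_within _ h1
        (Filter.Eventually.of_forall hmem)
    have hltend : Filter.Tendsto (fun n => l' ((p n).1)) Filter.atTop (nhds (l' q.1)) :=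
      ((hl q.1 hq1).tendsto).comp h1'
    have hutend : Filter.Tendsto (fun n => u' ((p n).1)) Filter.atTop (nhds (u' q.1)) :=
      ((hu q.1 hq1).tendsto).comp h1'
    refine ⟨hq1, ?_, ?_⟩
    · exact le_of_tendsto_of_tendsto' hltend h2 fun n => ((hpS n).2.1).le
    · exact le_of_tendsto_of_tendsto' h2 hutend fun n => ((hpS n).2.2).le
  · -- closed sector ⊆ closure S
    -- first: fibers over interior points
    have key : ∀ x ∈ Set.Ioo a' b', ∀ y ∈ Set.Icc (l' x) (u' x), (x, y) ∈ closure S := by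
      intro x hx y hy
      have hsub : ({x} ×ˢ Set.Ioo (l' x) (u' x) : Set (ℝ × ℝ)) ⊆ S := by
        rintro ⟨z1, z2⟩ ⟨hz1, hz2⟩
        simp only [Set.mem_singleton_iff] at hz1
        subst hz1
        exact ⟨hx, hz2⟩
      have := closure_mono hsub
      have hcl : closure ({x} ×ˢ Set.Ioo (l' x) (u' x) : Set (ℝ × ℝ)) =
          ({x} ×ˢ Set.Icc (l' x) (u' x) : Set (ℝ × ℝ)) := by
        rw [closure_prod_eq, closure_singleton, closure_Ioo (hlu x hx).ne]
      apply this
      rw [hcl]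
      exact ⟨rfl, hy⟩
    rintro ⟨x, y⟩ ⟨hx, hy⟩
    -- approximating sequence
    set δ : ℕ → ℝ := fun n => (b' - a') / (n + 3) with hδ
    have hδpos : ∀ n, 0 < δ n := fun n => by
      apply div_pos (by linarith) (by positivity)
    have hδlt : ∀ n, a' + δ n < b' - δ n := by
      intro n
      have h1 : δ n < (b' - a') / 2 := by
        rw [hδ]
        apply div_lt_div_of_pos_left (by linarith) (by norm_num)
        · linarith [Nat.cast_nonneg (α := ℝ) n]
      linarith
    have hδ0 : Filter.Tendsto δ Filter.atTop (nhds 0) := by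
      rw [hδ]
      apply Filter.Tendsto.div_atTop (tendsto_const_nhds)
      exact Filter.tendsto_atTop_add_const_right _ 3 tendsto_natCast_atTop_atTop
    set X : ℕ → ℝ := fun n => min (max x (a' + δ n)) (b' - δ n) with hX
    have hXmem : ∀ n, X n ∈ Set.Ioo a' b' := by
      intro n
      constructor
      · have : a' + δ n ≤ X n :=
          le_min (le_max_right _ _) (hδlt n).le
        linarith [hδpos n]
      · have : X n ≤ b' - δ n := min_le_right _ _
        linarith [hδpos n]
    have hXtend : Filter.Tendsto X Filter.atTop (nhds x) := by
      have h1 : Filter.Tendsto (fun n => a' + δ n) Filter.atTop (nhds a') := by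
        simpa using (tendsto_const_nhds (x := a')).add hδ0
      have h2 : Filter.Tendsto (fun n => b' - δ n) Filter.atTop (nhds b') := by
        simpa using (tendsto_const_nhds (x := b')).sub hδ0
      have := ((tendsto_const_nhds (x := x)).max h1).min h2
      simpa [max_eq_left hx.1, min_eq_left hx.2] using this
    have hXtend' : Filter.Tendsto X Filter.atTop (nhdsWithin x (Set.Icc a' b')) :=
      tendsto_nhdsWithin_of_tendsto_nhds_of_eventually_within _ hXtend
        (Filter.Eventually.of_forall fun n => Set.Ioo_subset_Icc_self (hXmem n))
    have hltend : Filter.Tendsto (fun n => l' (X n)) Filter.atTop (nhds (l' x)) :=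
      ((hl x hx).tendsto).comp hXtend'
    have hutend : Filter.Tendsto (fun n => u' (X n)) Filter.atTop (nhds (u' x)) :=
      ((hu x hx).tendsto).comp hXtend'
    set Y : ℕ → ℝ := fun n => min (max y (l' (X n))) (u' (X n)) with hY
    have hYmem : ∀ n, Y n ∈ Set.Icc (l' (X n)) (u' (X n)) := by
      intro n
      exact ⟨le_min (le_max_right _ _) (hlu _ (hXmem n)).le, min_le_right _ _⟩
    have hYtend : Filter.Tendsto Y Filter.atTop (nhds y) := by
      have := ((tendsto_const_nhds (x := y)).max hltend).min hutend
      simpa [max_eq_left hy.1, min_eq_left hy.2] using this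
    have hPt : Filter.Tendsto (fun n => (X n, Y n)) Filter.atTop (nhds (x, y)) :=
      hXtend.prodMk_nhds hYtend
    exact isClosed_closure.mem_of_tendsto hPt
      (Filter.Eventually.of_forall fun n => key (X n) (hXmem n) (Y n) (hYmem n))
end

section
/- Let a', b' ∈ ℝ with a' < b', and let l', u' : [a', b'] → ℝ be continuous functions with l'(x) < u'(x) for all x ∈ (a', b'). Then the open sector X = {(x, y) ∈ ℝ² : a' < x < b', l'(x) < y < u'(x)} is locally boundary connected in ℝ². -/
/-!
Extend the bounds by Tietze to continuous functions on `ℝ`; this does not change the sector.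
Every point `(x₀, y₀)` of the closure of the region `f < y < g` over an interval satisfies
`f x₀ ≤ y₀ ≤ g x₀`, so for a box `(x₀ - δ, x₀ + δ) × (y₀ - ε, y₀ + ε)` with `δ` small the
clipped bounds `max f (y₀ - ε) < min g (y₀ + ε)` still hold over the smaller interval. The trace
of the region on the box is then again a region between two continuous graphs over an interval,
which is the image of `interval × (0, 1)` under `(x, t) ↦ (x, f x + t (g x - f x))`.
-/

open Set Filter Topology

/-- A subset `X` of a topological space is *locally boundary connected* if every point of
the boundary `closure X \ X` has a base of neighbourhoods `N` such that `X ∩ N` is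
connected. -/
def LocallyBoundaryConnected {α : Type*} [TopologicalSpace α] (X : Set α) : Prop :=
  ∀ p ∈ closure X \ X, ∀ U ∈ nhds p, ∃ N ∈ nhds p, N ⊆ U ∧ IsConnected (X ∩ N)

universe u v in
theorem ContinuousOn.exists_continuous_eqOn {X : Type u} {Y : Type v} [TopologicalSpace X]
    [NormalSpace X] [TopologicalSpace Y] [TietzeExtension.{u, v} Y] {s : Set X}
    (hs : IsClosed s) {f : X → Y} (hf : ContinuousOn f s) :
    ∃ g : X → Y, Continuous g ∧ EqOn g f s := by
  obtain ⟨g, hg⟩ := ContinuousMap.exists_restrict_eq hs ⟨s.domRestrict f, hf.domRestrict⟩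
  exact ⟨g, g.continuous, fun x hx => DFunLike.congr_fun hg ⟨x, hx⟩⟩

section regionBetween

variable {α : Type*} {f g : α → ℝ} {s : Set α}

theorem regionBetween_congr {f' g' : α → ℝ} (hf : EqOn f f' s) (hg : EqOn g g' s) :
    regionBetween f g s = regionBetween f' g' s := by
  ext ⟨x, y⟩
  simp only [regionBetween, mem_ofPred_eq, mem_Ioo]
  exact and_congr_right fun hx => by rw [hf hx, hg hx]

theorem regionBetween_inter_prod_Ioo (t : Set α) (c d : ℝ) :
    regionBetween f g s ∩ t ×ˢ Ioo c d =
      regionBetween (fun x => max (f x) c) (fun x => min (g x) d) (s ∩ t) := by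
  ext ⟨x, y⟩
  simp only [regionBetween, mem_inter_iff, mem_prod, mem_ofPred_eq, mem_Ioo, max_lt_iff,
    lt_min_iff]
  tauto

theorem regionBetween_eq_image_prod_Ioo (hfg : ∀ x ∈ s, f x < g x) :
    regionBetween f g s =
      (fun q : α × ℝ => (q.1, f q.1 + q.2 * (g q.1 - f q.1))) '' s ×ˢ Ioo 0 1 := by
  ext ⟨x, y⟩
  simp only [regionBetween, mem_ofPred_eq, mem_image, mem_prod, mem_Ioo, Prod.mk.injEq,
    Prod.exists]
  constructor
  · rintro ⟨hx, hfy, hyg⟩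
    have hgap : 0 < g x - f x := sub_pos.mpr (hfy.trans hyg)
    refine ⟨x, (y - f x) / (g x - f x), ⟨hx, div_pos (by linarith) hgap,
      (div_lt_one hgap).mpr (by linarith)⟩, rfl, ?_⟩
    rw [div_mul_cancel₀ _ hgap.ne']
    ring
  · rintro ⟨x, t, ⟨hx, ht0, ht1⟩, rfl, rfl⟩
    have hgap : 0 < g x - f x := sub_pos.mpr (hfg x hx)
    exact ⟨hx, by nlinarith, by nlinarith⟩

variable [TopologicalSpace α]

theorem closure_regionBetween_subset (hf : Continuous f) (hg : Continuous g) :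
    closure (regionBetween f g s) ⊆ {p | f p.1 ≤ p.2 ∧ p.2 ≤ g p.1} :=
  closure_minimal (fun _ hp => ⟨hp.2.1.le, hp.2.2.le⟩)
    ((isClosed_le (hf.comp continuous_fst) continuous_snd).inter
      (isClosed_le continuous_snd (hg.comp continuous_fst)))

theorem IsPreconnected.regionBetween (hs : IsPreconnected s) (hf : ContinuousOn f s)
    (hg : ContinuousOn g s) (hfg : ∀ x ∈ s, f x < g x) :
    IsPreconnected (regionBetween f g s) := by
  rw [regionBetween_eq_image_prod_Ioo hfg]
  have hf' : ContinuousOn (fun q : α × ℝ => f q.1) (s ×ˢ Ioo 0 1) :=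
    hf.comp continuousOn_fst fun _ hq => hq.1
  have hg' : ContinuousOn (fun q : α × ℝ => g q.1) (s ×ˢ Ioo 0 1) :=
    hg.comp continuousOn_fst fun _ hq => hq.1
  exact (hs.prod isPreconnected_Ioo).image _
    (continuousOn_fst.prodMk (hf'.add (continuousOn_snd.mul (hg'.sub hf'))))

end regionBetween

theorem locallyBoundaryConnected_regionBetween {f g : ℝ → ℝ} {s : Set ℝ} (hs : s.OrdConnected)
    (hf : Continuous f) (hg : Continuous g) (hfg : ∀ x ∈ s, f x < g x) :
    LocallyBoundaryConnected (regionBetween f g s) := by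
  rintro ⟨x₀, y₀⟩ ⟨hp, -⟩ U hU
  obtain ⟨hfy, hyg⟩ : f x₀ ≤ y₀ ∧ y₀ ≤ g x₀ := closure_regionBetween_subset hf hg hp
  obtain ⟨⟨δU, ε⟩, ⟨hδU, hε⟩, hU⟩ :=
    ((nhds_basis_Ioo_pos x₀).prod_nhds (nhds_basis_Ioo_pos y₀)).mem_iff.mp hU
  dsimp only at hδU hε hU
  have hclip : ∀ᶠ x in 𝓝 x₀, x ∈ Ioo (x₀ - δU) (x₀ + δU) ∧ f x < y₀ + ε ∧ y₀ - ε < g x :=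
    Eventually.and (Ioo_mem_nhds (by linarith) (by linarith))
      ((hf.continuousAt.eventually_lt continuousAt_const (by linarith)).and
        (continuousAt_const.eventually_lt hg.continuousAt (by linarith)))
  obtain ⟨δ, hδ, hclip⟩ := Metric.eventually_nhds_iff_ball.mp hclip
  simp only [Real.ball_eq_Ioo] at hclip
  set N := Ioo (x₀ - δ) (x₀ + δ) ×ˢ Ioo (y₀ - ε) (y₀ + ε)
  have hN : N ∈ 𝓝 (x₀, y₀) :=
    prod_mem_nhds (Ioo_mem_nhds (by linarith) (by linarith))
      (Ioo_mem_nhds (by linarith) (by linarith))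
  have hNU : N ⊆ U := (prod_mono (fun x hx => (hclip x hx).1) le_rfl).trans hU
  have hne : (regionBetween f g s ∩ N).Nonempty :=
    inter_comm N _ ▸ mem_closure_iff_nhds.mp hp N hN
  refine ⟨N, hN, hNU, hne, ?_⟩
  rw [regionBetween_inter_prod_Ioo]
  refine (hs.inter ordConnected_Ioo).isPreconnected.regionBetween
    (hf.max continuous_const).continuousOn (hg.min continuous_const).continuousOn ?_
  rintro x ⟨hxs, hx⟩
  obtain ⟨-, hfx, hgx⟩ := hclip x hx
  exact max_lt (lt_min (hfg x hxs) hfx) (lt_min hgx (by linarith))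

theorem sector_locallyBoundaryConnected_general (a' b' : ℝ)
    (l' u' : ℝ → ℝ)
    (hl : ContinuousOn l' (Set.Icc a' b')) (hu : ContinuousOn u' (Set.Icc a' b'))
    (hlu : ∀ x ∈ Set.Ioo a' b', l' x < u' x) :
    LocallyBoundaryConnected
      {q : ℝ × ℝ | q.1 ∈ Set.Ioo a' b' ∧ q.2 ∈ Set.Ioo (l' q.1) (u' q.1)} := by
  obtain ⟨l, hlc, hll'⟩ := hl.exists_continuous_eqOn isClosed_Icc
  obtain ⟨u, huc, huu'⟩ := hu.exists_continuous_eqOn isClosed_Icc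
  have hsector : regionBetween l u (Ioo a' b') = regionBetween l' u' (Ioo a' b') :=
    regionBetween_congr (hll'.mono Ioo_subset_Icc_self) (huu'.mono Ioo_subset_Icc_self)
  change LocallyBoundaryConnected (regionBetween l' u' (Ioo a' b'))
  rw [← hsector]
  exact locallyBoundaryConnected_regionBetween ordConnected_Ioo hlc huc
    fun x hx => by
      rw [hll' (Ioo_subset_Icc_self hx), huu' (Ioo_subset_Icc_self hx)]
      exact hlu x hx

/-- for `a' < b'` and continuous `l', u' : [a', b'] → ℝ` with `l' < u'` on
`(a', b')`, the open sector `{(x,y) : a' < x < b', l'(x) < y < u'(x)}` is locally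
boundary connected in `ℝ²`. -/
theorem sector_locallyBoundaryConnected (a' b' : ℝ) (hab : a' < b')
    (l' u' : ℝ → ℝ)
    (hl : ContinuousOn l' (Set.Icc a' b')) (hu : ContinuousOn u' (Set.Icc a' b'))
    (hlu : ∀ x ∈ Set.Ioo a' b', l' x < u' x) :
    LocallyBoundaryConnected
      {q : ℝ × ℝ | q.1 ∈ Set.Ioo a' b' ∧ q.2 ∈ Set.Ioo (l' q.1) (u' q.1)} :=
  sector_locallyBoundaryConnected_general a' b' l' u' hl hu hlu
end

section
/- Let a', b' ∈ ℝ with a' < b' and let f : [a', b'] → ℝ be continuous. Then the graph X = {(x, f(x)) : a' < x < b'} is locally boundary connected in ℝ². -/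
/-!
Write `X` for the graph of `f` over `(a', b')`. By compactness of `[a', b']`, every point of
`closure X` is of the form `(c, f c)` with `c ∈ [a', b']`. Given a neighbourhood `U` of it,
continuity of `f` on `[a', b']` yields an interval `J` around `c` whose graph over
`[a', b'] ∩ J` lies in `U`. Then `X ∩ (J × ℝ) ∩ U` is the graph of `f` over the interval
`(a', b') ∩ J`, which is connected; it is nonempty because `(c, f c)` lies in `closure X`.
-/

open Set Filter Topology

theorem Set.graphOn_inter_fst_preimage_inter_eq {α β : Type*} {f : α → β} {s J : Set α}
    {U : Set (α × β)} (hU : (s ∩ J).graphOn f ⊆ U) :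
    s.graphOn f ∩ (Prod.fst ⁻¹' J ∩ U) = (s ∩ J).graphOn f := by
  refine Subset.antisymm ?_ fun q hq => ⟨image_mono inter_subset_left hq, ?_, hU hq⟩
  · rintro _ ⟨⟨x, hxs, rfl⟩, hxJ, -⟩
    exact ⟨x, ⟨hxs, hxJ⟩, rfl⟩
  · obtain ⟨x, hx, rfl⟩ := hq
    exact hx.2

variable {α β : Type*} [TopologicalSpace α] [TopologicalSpace β]

theorem LocallyBoundaryConnected.of_isPreconnected_inter {X : Set α}
    (h : ∀ p ∈ closure X \ X, ∀ U ∈ 𝓝 p, ∃ N ∈ 𝓝 p, N ⊆ U ∧ IsPreconnected (X ∩ N)) :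
    LocallyBoundaryConnected X := by
  intro p hp U hU
  obtain ⟨N, hN, hNU, hX⟩ := h p hp U hU
  exact ⟨N, hN, hNU, inter_comm N X ▸ mem_closure_iff_nhds.1 hp.1 N hN, hX⟩

theorem closure_graphOn_subset [T2Space α] [T2Space β] {f : α → β} {s t : Set α}
    (ht : IsCompact t) (hst : s ⊆ t) (hf : ContinuousOn f t) :
    closure (s.graphOn f) ⊆ t.graphOn f :=
  closure_minimal (image_mono hst) (ht.image_of_continuousOn (continuousOn_id.prodMk hf)).isClosed

section Order

variable [ConditionallyCompleteLinearOrder α] [OrderTopology α] [DenselyOrdered α]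

theorem exists_nhds_isPreconnected_graphOn_inter {f : α → β} {s t : Set α} {c : α}
    (hs : s.OrdConnected) (hst : s ⊆ t) (hf : ContinuousOn f t) (hc : c ∈ t)
    {U : Set (α × β)} (hU : U ∈ 𝓝 (c, f c)) :
    ∃ N ∈ 𝓝 (c, f c), N ⊆ U ∧ IsPreconnected (s.graphOn f ∩ N) := by
  have hg : ContinuousOn (fun x => (x, f x)) t := continuousOn_id.prodMk hf
  obtain ⟨V, hV, hVU⟩ := mem_nhdsWithin_iff_exists_mem_nhds_inter.1 (hg c hc hU)
  obtain ⟨a, b, -, hJ, hJV⟩ := exists_Icc_mem_subset_of_mem_nhds hV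
  have hJU : (s ∩ Icc a b).graphOn f ⊆ U := by
    rintro _ ⟨x, hx, rfl⟩
    exact hVU ⟨hJV hx.2, hst hx.1⟩
  refine ⟨Prod.fst ⁻¹' Icc a b ∩ U, inter_mem (continuousAt_fst.preimage_mem_nhds hJ) hU,
    inter_subset_right, ?_⟩
  rw [graphOn_inter_fst_preimage_inter_eq hJU]
  exact (hs.inter ordConnected_Icc).isPreconnected.image _
    (hg.mono (inter_subset_left.trans hst))

theorem locallyBoundaryConnected_graphOn [T2Space β] {f : α → β} {s t : Set α}
    (hs : s.OrdConnected) (ht : IsCompact t) (hst : s ⊆ t) (hf : ContinuousOn f t) :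
    LocallyBoundaryConnected (s.graphOn f) := by
  refine .of_isPreconnected_inter fun p hp U hU => ?_
  obtain ⟨c, hc, rfl⟩ := closure_graphOn_subset ht hst hf hp.1
  exact exists_nhds_isPreconnected_graphOn_inter hs hst hf hc hU

end Order

theorem section_locallyBoundaryConnected_general (a' b' : ℝ)
    (f : ℝ → ℝ) (hf : ContinuousOn f (Set.Icc a' b')) :
    LocallyBoundaryConnected
      {q : ℝ × ℝ | q.1 ∈ Set.Ioo a' b' ∧ q.2 = f q.1} := by
  have hX : {q : ℝ × ℝ | q.1 ∈ Set.Ioo a' b' ∧ q.2 = f q.1} = (Ioo a' b').graphOn f := by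
    ext q
    simp [eq_comm]
  rw [hX]
  exact locallyBoundaryConnected_graphOn ordConnected_Ioo isCompact_Icc Ioo_subset_Icc_self hf

/-- for `a' < b'` and continuous `f : [a', b'] → ℝ`, the graph
`{(x, f(x)) : a' < x < b'}` is locally boundary connected in `ℝ²`. -/
theorem section_locallyBoundaryConnected (a' b' : ℝ) (hab : a' < b')
    (f : ℝ → ℝ) (hf : ContinuousOn f (Set.Icc a' b')) :
    LocallyBoundaryConnected
      {q : ℝ × ℝ | q.1 ∈ Set.Ioo a' b' ∧ q.2 = f q.1} :=
  section_locallyBoundaryConnected_general a' b' f hf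
end

section
/- Let B ⊆ ℝⁿ be locally boundary connected in ℝⁿ. Let l, u : B → [-∞, ∞] be continuous maps into the extended real line (with its order topology) satisfying l(x) < u(x) for all x ∈ B, and let C = {(x, y) ∈ B × ℝ : l(x) < y < u(x)} ⊆ ℝⁿ × ℝ. Let C' = {(x, y) ∈ ℝⁿ × [-∞, ∞] : x ∈ B and l(x) < y < u(x) with y real} be the image of C under the map (x, y) ↦ (x, y) with y viewed in [-∞, ∞]. Then for every p ∈ closure(B) \ B, the fibre F = {y ∈ [-∞, ∞] : (p, y) ∈ closure(C')}, where the closure is taken in ℝⁿ × [-∞, ∞], is closed and order-connected: whenever y₁, y₂ ∈ F and y₁ ≤ y ≤ y₂, then y ∈ F. -/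
/-- sector case: let `B ⊆ ℝⁿ` be locally boundary connected, and let
`l, u : B → [-∞, ∞]` be continuous with `l < u` on `B`. Let `C'` be the sector
`{(x, y) : x ∈ B, l(x) < y < u(x), y real}` viewed inside `ℝⁿ × [-∞, ∞]`. Then for every
`p ∈ closure B \ B`, the fibre `{y : (p, y) ∈ closure C'}` is closed and order-connected. -/
theorem fibre_closure_sector_segment (n : ℕ) (B : Set (Fin n → ℝ))
    (hB : LocallyBoundaryConnected B)
    (l u : (Fin n → ℝ) → EReal)
    (hl : ContinuousOn l B) (hu : ContinuousOn u B)
    (hlu : ∀ x ∈ B, l x < u x)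
    (C' : Set ((Fin n → ℝ) × EReal))
    (hC' : C' = {q | q.1 ∈ B ∧ ∃ y : ℝ, q.2 = (y : EReal) ∧ l q.1 < (y : EReal) ∧ (y : EReal) < u q.1})
    (p : Fin n → ℝ) (hp : p ∈ closure B \ B) :
    IsClosed {y : EReal | (p, y) ∈ closure C'} ∧
      ∀ y₁ ∈ {y : EReal | (p, y) ∈ closure C'},
        ∀ y₂ ∈ {y : EReal | (p, y) ∈ closure C'},
          ∀ y : EReal, y₁ ≤ y → y ≤ y₂ → (p, y) ∈ closure C' := by
  constructor
  · have : {y : EReal | (p, y) ∈ closure C'} = (fun y : EReal => (p, y)) ⁻¹' closure C' := rfl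
    rw [this]
    exact isClosed_closure.preimage (Continuous.prodMk_right p)
  · intro y₁ hy₁ y₂ hy₂ y h1 h2
    rcases eq_or_lt_of_le h1 with rfl | hlt1
    · exact hy₁
    rcases eq_or_lt_of_le h2 with rfl | hlt2
    · exact hy₂
    -- now y₁ < y < y₂
    rw [mem_closure_iff_nhds]
    intro t ht
    rcases mem_nhds_prod_iff.1 ht with ⟨U, hU, V, hV, hUV⟩
    -- find an interval (a, b) around y inside V
    rcases (mem_nhds_iff_exists_Ioo_subset' ⟨y₁, hlt1⟩ ⟨y₂, hlt2⟩).1 hV with ⟨a', b', hy, hIV⟩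
    set a : EReal := max a' y₁ with ha_def
    set b : EReal := min b' y₂ with hb_def
    have hay : a < y := max_lt hy.1 hlt1
    have hyb : y < b := lt_min hy.2 hlt2
    have hIab : Set.Ioo a b ⊆ V := fun z hz =>
      hIV ⟨lt_of_le_of_lt (le_max_left _ _) hz.1, lt_of_lt_of_le hz.2 (min_le_left _ _)⟩
    -- neighbourhood N of p from local boundary connectedness
    rcases hB p hp U hU with ⟨N, hN, hNU, hconn⟩
    -- point of C' near (p, y₁) with second coordinate < b
    have h₁ : ((N ×ˢ Set.Iio b) ∩ C').Nonempty :=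
      mem_closure_iff_nhds.1 hy₁ _
        (prod_mem_nhds hN (isOpen_Iio.mem_nhds (lt_of_le_of_lt h1 hyb)))
    have h₂ : ((N ×ˢ Set.Ioi a) ∩ C').Nonempty :=
      mem_closure_iff_nhds.1 hy₂ _
        (prod_mem_nhds hN (isOpen_Ioi.mem_nhds (hay.trans hlt2)))
    obtain ⟨⟨x₁, t₁⟩, ⟨hx₁N, ht₁b⟩, hq₁⟩ := h₁
    obtain ⟨⟨x₂, t₂⟩, ⟨hx₂N, ht₂a⟩, hq₂⟩ := h₂
    rw [hC'] at hq₁ hq₂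
    obtain ⟨hx₁B, s₁, hs₁, hls₁, hs₁u⟩ := hq₁
    obtain ⟨hx₂B, s₂, hs₂, hls₂, hs₂u⟩ := hq₂
    -- x₁ : l x₁ < b ; x₂ : a < u x₂
    have hlx₁ : l x₁ < b := hls₁.trans (hs₁ ▸ ht₁b)
    have hux₂ : a < u x₂ := (hs₂ ▸ ht₂a : a < (s₂ : EReal)).trans hs₂u
    -- opens realising the preimages
    obtain ⟨O₁, hO₁, hO₁eq⟩ := (continuousOn_iff'.1 hl) (Set.Iio b) isOpen_Iio
    obtain ⟨O₂, hO₂, hO₂eq⟩ := (continuousOn_iff'.1 hu) (Set.Ioi a) isOpen_Ioi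
    have hcover : B ∩ N ⊆ O₁ ∪ O₂ := by
      intro x hx
      by_cases hxb : l x < b
      · have : x ∈ l ⁻¹' Set.Iio b ∩ B := ⟨hxb, hx.1⟩
        rw [hO₁eq] at this; exact Or.inl this.1
      · have hxu : a < u x := lt_of_lt_of_le (hay.trans hyb) (le_of_not_gt hxb) |>.trans (hlu x hx.1)
        have : x ∈ u ⁻¹' Set.Ioi a ∩ B := ⟨hxu, hx.1⟩
        rw [hO₂eq] at this; exact Or.inr this.1
    have hne₁ : ((B ∩ N) ∩ O₁).Nonempty := by
      refine ⟨x₁, ⟨hx₁B, hx₁N⟩, ?_⟩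
      have : x₁ ∈ l ⁻¹' Set.Iio b ∩ B := ⟨hlx₁, hx₁B⟩
      rw [hO₁eq] at this; exact this.1
    have hne₂ : ((B ∩ N) ∩ O₂).Nonempty := by
      refine ⟨x₂, ⟨hx₂B, hx₂N⟩, ?_⟩
      have : x₂ ∈ u ⁻¹' Set.Ioi a ∩ B := ⟨hux₂, hx₂B⟩
      rw [hO₂eq] at this; exact this.1
    obtain ⟨x, hxBN, hxO₁, hxO₂⟩ := hconn.isPreconnected _ _ hO₁ hO₂ hcover hne₁ hne₂
    have hxB : x ∈ B := hxBN.1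
    have hlxb : l x < b := by
      have : x ∈ O₁ ∩ B := ⟨hxO₁, hxB⟩
      rw [← hO₁eq] at this; exact this.1
    have haux : a < u x := by
      have : x ∈ O₂ ∩ B := ⟨hxO₂, hxB⟩
      rw [← hO₂eq] at this; exact this.1
    -- find a real strictly between max (l x) a and min (u x) b
    have hcd : max (l x) a < min (u x) b :=
      max_lt (lt_min (hlu x hxB) hlxb) (lt_min haux (hay.trans hyb))
    obtain ⟨q, hq1, hq2⟩ := EReal.exists_rat_btwn_of_lt hcd
    refine ⟨(x, ((q : ℝ) : EReal)), hUV ⟨hNU hxBN.2, hIab ⟨?_, ?_⟩⟩, ?_⟩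
    · exact lt_of_le_of_lt (le_max_right _ _) hq1
    · exact lt_of_lt_of_le hq2 (min_le_right _ _)
    · rw [hC']
      exact ⟨hxB, q, rfl, lt_of_le_of_lt (le_max_left _ _) hq1,
        lt_of_lt_of_le hq2 (min_le_left _ _)⟩
end

section
/- Let B ⊆ ℝⁿ be locally boundary connected in ℝⁿ and let f : B → ℝ be continuous. Let D' = {(x, y) ∈ ℝⁿ × [-∞, ∞] : x ∈ B, y = f(x)} be the graph of f viewed inside ℝⁿ × [-∞, ∞]. Then for every p ∈ closure(B) \ B, the fibre F = {y ∈ [-∞, ∞] : (p, y) ∈ closure(D')}, where the closure is taken in ℝⁿ × [-∞, ∞], is closed and order-connected: whenever y₁, y₂ ∈ F and y₁ ≤ y ≤ y₂, then y ∈ F. -/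
/-- section case: let `B ⊆ ℝⁿ` be locally boundary connected and let
`f : B → ℝ` be continuous. Let `D'` be the graph of `f` viewed inside `ℝⁿ × [-∞, ∞]`.
Then for every `p ∈ closure B \ B`, the fibre `{y : (p, y) ∈ closure D'}` is closed and
order-connected. -/
theorem fibre_closure_section_segment (n : ℕ) (B : Set (Fin n → ℝ))
    (hB : LocallyBoundaryConnected B)
    (f : (Fin n → ℝ) → ℝ) (hf : ContinuousOn f B)
    (D' : Set ((Fin n → ℝ) × EReal))
    (hD' : D' = {q | q.1 ∈ B ∧ q.2 = (f q.1 : EReal)})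
    (p : Fin n → ℝ) (hp : p ∈ closure B \ B) :
    IsClosed {y : EReal | (p, y) ∈ closure D'} ∧
      ∀ y₁ ∈ {y : EReal | (p, y) ∈ closure D'},
        ∀ y₂ ∈ {y : EReal | (p, y) ∈ closure D'},
          ∀ y : EReal, y₁ ≤ y → y ≤ y₂ → (p, y) ∈ closure D' := by
  constructor
  · exact isClosed_closure.preimage (Continuous.prodMk_right p)
  · intro y₁ hy₁ y₂ hy₂ y h₁ h₂
    rcases eq_or_lt_of_le h₁ with rfl | h₁
    · exact hy₁
    rcases eq_or_lt_of_le h₂ with rfl | h₂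
    · exact hy₂
    -- y is strictly between, hence finite
    obtain ⟨r, rfl⟩ : ∃ r : ℝ, y = (r : EReal) := by
      induction y using EReal.rec with
      | bot => exact absurd h₁ (not_lt_bot)
      | coe r => exact ⟨r, rfl⟩
      | top => exact absurd h₂ (not_top_lt)
    rw [mem_closure_iff_nhds]
    intro t ht
    rw [mem_nhds_prod_iff] at ht
    obtain ⟨U, hU, V, hV, hUV⟩ := ht
    obtain ⟨N, hN, hNU, hNconn⟩ := hB p hp U hU
    -- find x₁ ∈ B ∩ N with f x₁ < r
    have hlow : ((N ×ˢ Set.Iio ((r : EReal))) ∩ D').Nonempty := by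
      exact mem_closure_iff_nhds.mp hy₁ _ (prod_mem_nhds hN (Iio_mem_nhds h₁))
    obtain ⟨⟨x₁, z₁⟩, ⟨hx₁N, hz₁⟩, hq₁⟩ := hlow
    rw [hD'] at hq₁
    obtain ⟨hx₁B, hz₁f⟩ := hq₁
    have hfx₁ : f x₁ < r := by
      rw [hz₁f, Set.mem_Iio] at hz₁
      exact_mod_cast hz₁
    -- find x₂ ∈ B ∩ N with r < f x₂
    have hhigh : ((N ×ˢ Set.Ioi ((r : EReal))) ∩ D').Nonempty := by
      exact mem_closure_iff_nhds.mp hy₂ _ (prod_mem_nhds hN (Ioi_mem_nhds h₂))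
    obtain ⟨⟨x₂, z₂⟩, ⟨hx₂N, hz₂⟩, hq₂⟩ := hhigh
    rw [hD'] at hq₂
    obtain ⟨hx₂B, hz₂f⟩ := hq₂
    have hfx₂ : r < f x₂ := by
      rw [hz₂f, Set.mem_Ioi] at hz₂
      exact_mod_cast hz₂
    -- intermediate value theorem on the connected set B ∩ N
    have hsub : Set.Icc (f x₁) (f x₂) ⊆ f '' (B ∩ N) :=
      hNconn.isPreconnected.intermediate_value ⟨hx₁B, hx₁N⟩ ⟨hx₂B, hx₂N⟩
        (hf.mono Set.inter_subset_left)
    obtain ⟨x, hxBN, hfx⟩ := hsub ⟨hfx₁.le, hfx₂.le⟩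
    refine ⟨(x, (r : EReal)), hUV ⟨hNU hxBN.2, mem_of_mem_nhds hV⟩, ?_⟩
    rw [hD']
    exact ⟨hxBN.1, by rw [hfx]⟩
end

section
/- Let S ⊆ ℝ³ be a closed set that is curtained. Let C ⊆ ℝ² be locally boundary connected in ℝ², let f : C → ℝ be continuous, and suppose the graph D = {(x, f(x)) : x ∈ C} is contained in S. Let p ∈ closure(C) \ C and suppose S has no curtain at p, i.e. {p} × ℝ is not contained in S. Let D' = {(x, y) ∈ ℝ² × [-∞, ∞] : x ∈ C, y = f(x)} be the graph of f viewed inside ℝ² × [-∞, ∞]. Then: (a) there exists a unique b ∈ [-∞, ∞] such that {y ∈ [-∞, ∞] : (p, y) ∈ closure(D')} = {b} (closure in ℝ² × [-∞, ∞]); (b) f(x) tends to b in [-∞, ∞] as x tends to p with x ∈ C (i.e. for every neighbourhood V of b in [-∞, ∞] there is a neighbourhood U of p in ℝ² with f(C ∩ U) ⊆ V); and (c) if b ∉ {-∞, ∞}, then (p, b) ∈ S. -/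
/-!
The fibre of `closure D'` over `p` is the set of cluster values of `f` at `p` in `[-∞, ∞]`. It is
the intersection of the closures of the images `f '' (C ∩ N)` over the neighbourhoods `N` of `p`
with `C ∩ N` connected; these images are intervals, so the cluster set is an interval too. Its
real points lie in the fibre of the closed set `S` over `p`, which is finite because `S` has no
curtain there. A finite interval of `[-∞, ∞]` has at most one point, and since `[-∞, ∞]` is compact
and `p ∈ closure C` there is exactly one cluster value `b`, to which `f` then converges.
-/

open Filter Topology Set

section ClusterSet

variable {α β : Type*} [TopologicalSpace α] [TopologicalSpace β]

theorem mem_closure_graph_iff_mapClusterPt (C : Set α) (g : α → β) (p : α) (b : β) :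
    (p, b) ∈ closure {q : α × β | q.1 ∈ C ∧ q.2 = g q.1} ↔ MapClusterPt b (𝓝[C] p) g := by
  constructor
  · intro h
    rw [mem_closure_iff_nhds] at h
    rw [MapClusterPt, clusterPt_iff_nonempty]
    intro U hU V hV
    rcases mem_nhdsWithin.1 (mem_map.1 hV) with ⟨W, hWopen, hpW, hWC⟩
    obtain ⟨q, hq1, hq2⟩ := h (W ×ˢ U) (prod_mem_nhds (hWopen.mem_nhds hpW) hU)
    refine ⟨g q.1, ?_, hWC ⟨hq1.1, hq2.1⟩⟩
    rw [← hq2.2]; exact hq1.2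
  · intro h
    rw [mem_closure_iff_nhds]
    intro t ht
    rcases mem_nhds_prod_iff.1 ht with ⟨U, hU, V, hV, hUV⟩
    have hmem : g '' (C ∩ U) ∈ Filter.map g (𝓝[C] p) :=
      image_mem_map (inter_mem_nhdsWithin C hU)
    obtain ⟨y, hyV, x, hx, hgx⟩ := clusterPt_iff_nonempty.1 h hV hmem
    exact ⟨(x, g x), hUV ⟨hx.2, by rw [hgx]; exact hyV⟩, hx.1, rfl⟩

theorem mem_of_mapClusterPt_of_graph_subset {S : Set (α × β)} (hS : IsClosed S) {C : Set α}
    {g : α → β} (hgS : ∀ x ∈ C, (x, g x) ∈ S) {p : α} {b : β}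
    (hb : MapClusterPt b (𝓝[C] p) g) : (p, b) ∈ S := by
  refine closure_minimal ?_ hS ((mem_closure_graph_iff_mapClusterPt C g p b).2 hb)
  rintro ⟨x, y⟩ ⟨hx, hy : y = g x⟩
  exact hy ▸ hgS x hx

theorem Topology.IsInducing.mapClusterPt_comp_iff {γ ι : Type*} [TopologicalSpace γ]
    {e : γ → β} (he : IsInducing e) {l : Filter ι} {g : ι → γ} {y : γ} :
    MapClusterPt (e y) l (e ∘ g) ↔ MapClusterPt y l g := by
  rw [MapClusterPt, ← Filter.map_map]
  exact he.mapClusterPt_iff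

end ClusterSet

theorem Filter.HasBasis.ordConnected_setOf_mapClusterPt {α β ι : Type*} [TopologicalSpace β]
    [LinearOrder β] [OrderClosedTopology β] {l : Filter α} {pi : ι → Prop} {s : ι → Set α}
    (hl : l.HasBasis pi s) {g : α → β} (hs : ∀ i, pi i → IsPreconnected (g '' s i)) :
    OrdConnected {b | MapClusterPt b l g} := by
  have hinter : {b | MapClusterPt b l g} = ⋂ (i) (_ : pi i), closure (g '' s i) := by
    ext b
    simp only [mem_ofPred_eq, MapClusterPt, (hl.map g).clusterPt_iff_forall_mem_closure, mem_iInter]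
  rw [hinter]
  exact ordConnected_iInter fun i => ordConnected_iInter fun hi => (hs i hi).closure.ordConnected

theorem Set.OrdConnected.subsingleton_of_finite {β : Type*} [LinearOrder β] [DenselyOrdered β]
    {s : Set β} (hs : s.OrdConnected) (hfin : s.Finite) : s.Subsingleton := by
  intro a ha b hb
  by_contra hab
  rcases lt_or_gt_of_ne hab with h | h
  · exact Icc_infinite h (hfin.subset (hs.out ha hb))
  · exact Icc_infinite h (hfin.subset (hs.out hb ha))

theorem LocallyBoundaryConnected.hasBasis_nhdsWithin {α : Type*} [TopologicalSpace α]
    {C : Set α} (hC : LocallyBoundaryConnected C) {p : α} (hp : p ∈ closure C \ C) :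
    (𝓝[C] p).HasBasis (fun N => N ∈ 𝓝 p ∧ IsConnected (C ∩ N)) (C ∩ ·) := by
  refine ⟨fun t => ⟨fun ht => ?_, fun ⟨N, hN, hNt⟩ =>
    mem_of_superset (inter_mem_nhdsWithin C hN.1) hNt⟩⟩
  obtain ⟨U, hU, hUt⟩ := mem_nhdsWithin_iff_exists_mem_nhds_inter.1 ht
  obtain ⟨N, hN, hNU, hconn⟩ := hC p hp U hU
  exact ⟨N, ⟨hN, hconn⟩, fun x hx => hUt ⟨hNU hx.2, hx.1⟩⟩

theorem EReal.finite_of_finite_preimage_coe {s : Set EReal}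
    (hs : ((↑) ⁻¹' s : Set ℝ).Finite) : s.Finite := by
  refine ((hs.image (↑)).insert ⊥ |>.insert ⊤).subset fun y hy => ?_
  induction y using EReal.rec with
  | bot => simp
  | top => simp
  | coe r => exact Or.inr (Or.inr ⟨r, hy, rfl⟩)

/-- let `S ⊆ ℝ³ = ℝ² × ℝ` be closed and curtained, `C ⊆ ℝ²` locally
boundary connected, `f : C → ℝ` continuous with graph `D ⊆ S`, and `p ∈ closure C \ C`
a point at which `S` has no curtain. Let `D'` be the graph of `f` inside `ℝ² × [-∞, ∞]`.
Then (a) there is a unique `b ∈ [-∞, ∞]` with fibre of `closure D'` over `p` equal to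
`{b}`; (b) `f(x) → b` as `x → p` within `C`; (c) if `b` is real then `(p, b) ∈ S`. -/
theorem bypass_closed_curtained
    (S : Set ((Fin 2 → ℝ) × ℝ)) (hSclosed : IsClosed S)
    (hScurt : ∀ q : Fin 2 → ℝ, {y : ℝ | (q, y) ∈ S}.Finite ∨ ∀ y : ℝ, (q, y) ∈ S)
    (C : Set (Fin 2 → ℝ)) (hC : LocallyBoundaryConnected C)
    (f : (Fin 2 → ℝ) → ℝ) (hf : ContinuousOn f C)
    (hDS : ∀ x ∈ C, (x, f x) ∈ S)
    (p : Fin 2 → ℝ) (hp : p ∈ closure C \ C)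
    (hnc : ¬ ∀ y : ℝ, (p, y) ∈ S)
    (D' : Set ((Fin 2 → ℝ) × EReal))
    (hD' : D' = {q | q.1 ∈ C ∧ q.2 = (f q.1 : EReal)}) :
    (∃! b : EReal, {y : EReal | (p, y) ∈ closure D'} = {b}) ∧
      ∀ b : EReal, {y : EReal | (p, y) ∈ closure D'} = {b} →
        Filter.Tendsto (fun x => (f x : EReal)) (nhdsWithin p C) (nhds b) ∧
          ∀ r : ℝ, b = (r : EReal) → (p, r) ∈ S := by
  set g : (Fin 2 → ℝ) → EReal := fun x => (f x : EReal)
  have hfibre : {y : EReal | (p, y) ∈ closure D'} = {b | MapClusterPt b (𝓝[C] p) g} := by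
    subst hD'
    exact ext fun b => mem_closure_graph_iff_mapClusterPt C g p b
  have hreal (r : ℝ) (hr : MapClusterPt (r : EReal) (𝓝[C] p) g) : (p, r) ∈ S :=
    mem_of_mapClusterPt_of_graph_subset hSclosed hDS
      (EReal.isEmbedding_coe.isInducing.mapClusterPt_comp_iff.1 hr)
  have hfinite : {b | MapClusterPt b (𝓝[C] p) g}.Finite :=
    EReal.finite_of_finite_preimage_coe (((hScurt p).resolve_right hnc).subset hreal)
  have hconn := (hC.hasBasis_nhdsWithin hp).ordConnected_setOf_mapClusterPt fun N hN =>
    (hN.2.image g (continuous_coe_real_ereal.comp_continuousOn (hf.mono inter_subset_left))).2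
  have := mem_closure_iff_nhdsWithin_neBot.1 hp.1
  obtain ⟨b, hb⟩ := exists_clusterPt_of_compactSpace (map g (𝓝[C] p))
  have hsingle : {b | MapClusterPt b (𝓝[C] p) g} = {b} :=
    (hconn.subsingleton_of_finite hfinite).eq_singleton_of_mem hb
  rw [hfibre]
  refine ⟨⟨b, hsingle, fun c hc => ?_⟩, fun c hc => ?_⟩
  · exact (singleton_eq_singleton_iff.1 (hsingle.symm.trans hc)).symm
  · obtain rfl : c = b := singleton_eq_singleton_iff.1 (hc.symm.trans hsingle)
    exact ⟨tendsto_nhds_of_unique_mapClusterPt fun x hx => hsingle.subset hx,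
      fun r hr => hreal r (hr ▸ hb)⟩
end
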